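/- With H, M, γ, ψ as above, there exists S_ψ ≥ M such that for all α > M, ψ'(α) > 0 if and only if α > S_ψ; moreover ψ is strictly increasing on (S_ψ, ∞) and hence injective there. -/

import Mathlib

/-!
On `(M, ∞)` the kernel `α l / (α - l)` is smooth in `α` with `∂_α = -(l / (α - l))²`, uniformly
bounded for `α` away from `M`, so `ψ' = 1 - γ ∫ (l / (α - l))² dH` is continuous and
nondecreasing, and it is positive for large `α` because the integral is at most `(M / (α - M))²`.
A continuous nondecreasing function that becomes positive does so past a threshold `S`, and the
mean value theorem makes `ψ` strictly increasing beyond it.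
-/

open MeasureTheory Set Filter Topology

lemma exists_forall_pos_iff_lt_of_monotoneOn {g : ℝ → ℝ} {a : ℝ} (hmono : MonotoneOn g (Ioi a))
    (hcont : ContinuousOn g (Ioi a)) (hpos : ∃ β, a < β ∧ 0 < g β) :
    ∃ S, a ≤ S ∧ ∀ α, a < α → (0 < g α ↔ S < α) := by
  set T := {α | a < α ∧ 0 < g α}
  have hT : T.Nonempty := hpos
  have hbdd : BddBelow T := ⟨a, fun _ hα => hα.1.le⟩
  refine ⟨sInf T, le_csInf hT fun _ hα => hα.1.le, fun α hα => ⟨fun hgα => ?_, fun hSα => ?_⟩⟩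
  · have hgpos : ∀ᶠ x in 𝓝 α, 0 < g x :=
      (hcont.continuousAt (Ioi_mem_nhds hα)).eventually (eventually_gt_nhds hgα)
    have hnear : ∀ᶠ x in 𝓝[<] α, x ∈ T :=
      ((eventually_gt_nhds hα).and hgpos).filter_mono nhdsWithin_le_nhds
    obtain ⟨x, hxT, hxα⟩ := (hnear.and self_mem_nhdsWithin).exists
    exact (csInf_le hbdd hxT).trans_lt hxα
  · obtain ⟨β, ⟨hβ, hgβ⟩, hβα⟩ := exists_lt_of_csInf_lt hT hSα
    exact hgβ.trans_le (hmono hβ hα hβα.le)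

section KernelBounds

variable {l M c x : ℝ}

lemma div_sub_nonneg (hl : l ∈ Icc 0 M) (hx : M < x) : 0 ≤ l / (x - l) :=
  div_nonneg hl.1 (by linarith [hl.2])

lemma div_sub_le (hl : l ∈ Icc 0 M) (hc : M < c) (hx : c ≤ x) : l / (x - l) ≤ M / (c - M) :=
  div_le_div₀ (hl.1.trans hl.2) hl.2 (by linarith) (by linarith [hl.2])

lemma sq_div_sub_le (hl : l ∈ Icc 0 M) (hc : M < c) (hx : c ≤ x) :
    (l / (x - l)) ^ 2 ≤ (M / (c - M)) ^ 2 :=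
  pow_le_pow_left₀ (div_sub_nonneg hl (hc.trans_le hx)) (div_sub_le hl hc hx) 2

lemma hasDerivAt_mul_div_sub (hx : x ≠ l) :
    HasDerivAt (fun y => y * (l / (y - l))) (-(l / (x - l)) ^ 2) x := by
  have hne : x - l ≠ 0 := sub_ne_zero.mpr hx
  refine ((hasDerivAt_id' x).fun_mul
    ((hasDerivAt_const x l).fun_div ((hasDerivAt_id' x).sub_const l) hne)).congr_deriv ?_
  field_simp
  ring

end KernelBounds

section StieltjesKernel

variable {H : Measure ℝ} [IsFiniteMeasure H] {M : ℝ}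

lemma integrable_div_sub (hH : ∀ᵐ l ∂H, l ∈ Icc 0 M) {α : ℝ} (hα : M < α) :
    Integrable (fun l => l / (α - l)) H :=
  .of_bound (Measurable.aestronglyMeasurable (by fun_prop)) (M / (α - M)) <| by
    filter_upwards [hH] with l hl
    rw [Real.norm_of_nonneg (div_sub_nonneg hl hα)]
    exact div_sub_le hl hα le_rfl

lemma integrable_sq_div_sub (hH : ∀ᵐ l ∂H, l ∈ Icc 0 M) {α : ℝ} (hα : M < α) :
    Integrable (fun l => (l / (α - l)) ^ 2) H :=
  .of_bound (Measurable.aestronglyMeasurable (by fun_prop)) ((M / (α - M)) ^ 2) <| by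
    filter_upwards [hH] with l hl
    rw [Real.norm_of_nonneg (sq_nonneg _)]
    exact sq_div_sub_le hl hα le_rfl

lemma integral_sq_div_sub_le (hH : ∀ᵐ l ∂H, l ∈ Icc 0 M) {α : ℝ} (hα : M < α) :
    ∫ l, (l / (α - l)) ^ 2 ∂H ≤ H.real univ * (M / (α - M)) ^ 2 := by
  rw [← smul_eq_mul, ← integral_const]
  refine integral_mono_ae (integrable_sq_div_sub hH hα) (integrable_const _) ?_
  filter_upwards [hH] with l hl
  exact sq_div_sub_le hl hα le_rfl

lemma antitoneOn_integral_sq_div_sub (hH : ∀ᵐ l ∂H, l ∈ Icc 0 M) :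
    AntitoneOn (fun α => ∫ l, (l / (α - l)) ^ 2 ∂H) (Ioi M) := by
  intro a ha b hb hab
  refine integral_mono_ae (integrable_sq_div_sub hH hb) (integrable_sq_div_sub hH ha) ?_
  filter_upwards [hH] with l hl
  exact pow_le_pow_left₀ (div_sub_nonneg hl hb)
    (div_le_div_of_nonneg_left hl.1 (by linarith [hl.2, mem_Ioi.mp ha]) (by linarith)) 2

lemma continuousOn_integral_sq_div_sub (hH : ∀ᵐ l ∂H, l ∈ Icc 0 M) :
    ContinuousOn (fun α => ∫ l, (l / (α - l)) ^ 2 ∂H) (Ioi M) := by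
  intro α hα
  obtain ⟨c, hMc, hcα⟩ := exists_between (mem_Ioi.mp hα)
  refine ContinuousAt.continuousWithinAt <| continuousAt_of_dominated
    (bound := fun _ => (M / (c - M)) ^ 2)
    (.of_forall fun x => Measurable.aestronglyMeasurable (by fun_prop)) ?_ (integrable_const _) ?_
  · filter_upwards [Ioi_mem_nhds hcα] with x hx
    filter_upwards [hH] with l hl
    rw [Real.norm_of_nonneg (sq_nonneg _)]
    exact sq_div_sub_le hl hMc hx.le
  · filter_upwards [hH] with l hl
    have hne : α - l ≠ 0 := by linarith [hl.2, mem_Ioi.mp hα]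
    exact (continuousAt_const.div (continuousAt_id.sub continuousAt_const) hne).pow 2

lemma hasDerivAt_mul_integral_div_sub (hH : ∀ᵐ l ∂H, l ∈ Icc 0 M) {α : ℝ} (hα : M < α) :
    HasDerivAt (fun x => x * ∫ l, l / (x - l) ∂H) (-∫ l, (l / (α - l)) ^ 2 ∂H) α := by
  obtain ⟨c, hMc, hcα⟩ := exists_between hα
  simp_rw [← integral_const_mul, ← integral_neg]
  refine (hasDerivAt_integral_of_dominated_loc_of_deriv_le (Ioi_mem_nhds hcα)
    (.of_forall fun x => Measurable.aestronglyMeasurable (by fun_prop))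
    ((integrable_div_sub hH hα).const_mul α) (Measurable.aestronglyMeasurable (by fun_prop))
    (F := fun x l => x * (l / (x - l))) (F' := fun x l => -(l / (x - l)) ^ 2)
    (bound := fun _ => (M / (c - M)) ^ 2) ?_ (integrable_const _) ?_).2
  · filter_upwards [hH] with l hl x hx
    rw [norm_neg, Real.norm_of_nonneg (sq_nonneg _)]
    exact sq_div_sub_le hl hMc (mem_Ioi.mp hx).le
  · filter_upwards [hH] with l hl x hx
    exact hasDerivAt_mul_div_sub (by linarith [hl.2, mem_Ioi.mp hx])

variable {γ : ℝ}

lemma monotoneOn_one_sub_mul_integral_sq_div_sub (hH : ∀ᵐ l ∂H, l ∈ Icc 0 M) (hγ : 0 ≤ γ) :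
    MonotoneOn (fun α => 1 - γ * ∫ l, (l / (α - l)) ^ 2 ∂H) (Ioi M) := fun _ ha _ hb hab =>
  sub_le_sub_left (mul_le_mul_of_nonneg_left (antitoneOn_integral_sq_div_sub hH ha hb hab) hγ) 1

lemma continuousOn_one_sub_mul_integral_sq_div_sub (hH : ∀ᵐ l ∂H, l ∈ Icc 0 M) :
    ContinuousOn (fun α => 1 - γ * ∫ l, (l / (α - l)) ^ 2 ∂H) (Ioi M) :=
  continuousOn_const.sub ((continuousOn_integral_sq_div_sub hH).const_smul γ)

lemma exists_one_sub_mul_integral_sq_div_sub_pos (hH : ∀ᵐ l ∂H, l ∈ Icc 0 M) (hM : 0 < M)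
    (hγ : 0 ≤ γ) : ∃ β, M < β ∧ 0 < 1 - γ * ∫ l, (l / (β - l)) ^ 2 ∂H := by
  set m := H.real univ
  have hγm : 0 ≤ γ * m := mul_nonneg hγ measureReal_nonneg
  -- `β - M = (γ m + 1) M` makes the bound `γ m (M / (β - M))²` equal to `γ m / (γ m + 1)² < 1`
  have hβ : M < M + (γ * m + 1) * M := by nlinarith
  refine ⟨_, hβ, ?_⟩
  have hF := integral_sq_div_sub_le hH hβ
  rw [add_sub_cancel_left, div_mul_cancel_right₀ hM.ne', inv_pow] at hF
  have hbound : γ * (m * ((γ * m + 1) ^ 2)⁻¹) < 1 := by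
    rw [← mul_assoc, ← div_eq_mul_inv, div_lt_one (by positivity)]
    nlinarith
  nlinarith [mul_le_mul_of_nonneg_left hF hγ]

end StieltjesKernel

theorem psi_threshold_general (H : Measure ℝ) [IsProbabilityMeasure H] (M γ : ℝ)
    (hM : 0 < M) (hγ : 0 < γ)
    (hsupp : H (Set.Icc 0 M)ᶜ = 0)
    (ψ : ℝ → ℝ)
    (hψ : ∀ α : ℝ, M < α → ψ α = α + γ * α * ∫ l, l / (α - l) ∂H) :
    ∃ S : ℝ, M ≤ S ∧ (∀ α : ℝ, M < α → (0 < deriv ψ α ↔ S < α)) ∧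
      StrictMonoOn ψ (Set.Ioi S) ∧ Set.InjOn ψ (Set.Ioi S) := by
  have hH : ∀ᵐ l ∂H, l ∈ Icc 0 M := ae_iff.mpr hsupp
  have hderiv (α : ℝ) (hα : M < α) :
      HasDerivAt ψ (1 - γ * ∫ l, (l / (α - l)) ^ 2 ∂H) α := by
    have hψ_eq : ψ =ᶠ[𝓝 α] fun x => x + γ * (x * ∫ l, l / (x - l) ∂H) := by
      filter_upwards [Ioi_mem_nhds hα] with x hx
      rw [hψ x hx, mul_assoc]
    have hψ' := (hasDerivAt_id' α).add ((hasDerivAt_mul_integral_div_sub hH hα).const_mul γ)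
    exact (hψ'.congr_deriv (by ring)).congr_of_eventuallyEq hψ_eq
  obtain ⟨S, hMS, hS⟩ := exists_forall_pos_iff_lt_of_monotoneOn
    (monotoneOn_one_sub_mul_integral_sq_div_sub hH hγ.le)
    (continuousOn_one_sub_mul_integral_sq_div_sub hH)
    (exists_one_sub_mul_integral_sq_div_sub_pos hH hM hγ.le)
  have hderiv_pos (α : ℝ) (hα : M < α) : 0 < deriv ψ α ↔ S < α := by
    rw [(hderiv α hα).deriv]
    exact hS α hα
  have hψ_mono : StrictMonoOn ψ (Ioi S) :=
    strictMonoOn_of_deriv_pos (convex_Ioi S)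
      (fun x hx => (hderiv x (hMS.trans_lt hx)).continuousAt.continuousWithinAt)
      (fun x hx => (hderiv_pos x (hMS.trans_lt (interior_subset hx))).mpr (interior_subset hx))
  exact ⟨S, hMS, hderiv_pos, hψ_mono, hψ_mono.injOn⟩

/-- There is a threshold S_ψ ≥ M such that ψ'(α) > 0 iff α > S_ψ
(for α > M), and ψ is strictly increasing (hence injective) on (S_ψ, ∞). -/
theorem psi_threshold (H : Measure ℝ) [IsProbabilityMeasure H] (M γ : ℝ)
    (hM : 0 < M) (hγ : 0 < γ)
    (hsupp : H (Set.Icc 0 M)ᶜ = 0)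
    (hMsup : ∀ M' : ℝ, H (Set.Icc 0 M')ᶜ = 0 → M ≤ M')
    (hH0 : H ≠ Measure.dirac 0)
    (ψ : ℝ → ℝ)
    (hψ : ∀ α : ℝ, M < α → ψ α = α + γ * α * ∫ l, l / (α - l) ∂H) :
    ∃ S : ℝ, M ≤ S ∧ (∀ α : ℝ, M < α → (0 < deriv ψ α ↔ S < α)) ∧
      StrictMonoOn ψ (Set.Ioi S) ∧ Set.InjOn ψ (Set.Ioi S) :=
  psi_threshold_general H M γ hM hγ hsupp ψ hψ
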